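/- For all n, x ∈ ℤ and t ≥ 0, the series ∑_{y ≥ x} F_n(y,t) converges absolutely and F_{n+1}(x,t) = ∑_{y ≥ x} F_n(y,t). -/

import Mathlib

/-!
On the circle `|w| = R > 1` the geometric series `∑_{y ≥ x} w^(n-y-1)` converges uniformly,
to `w^(n-x)/(w-1) = -w^(n-x) (1-w)^(-1)`, so it may be summed under the contour integral. The
extra factor `(1-w)^(-1)` turns `(1-w)^(-n)` into `(1-w)^(-(n+1))`, and the sign is absorbed by
`(-1)^(n+1) = -(-1)^n`.
-/

/-- `F n x t R = ((-1)^n/(2πi)) ∮_{|w|=R} dw w^(n-x-1) (1-w)^(-n) e^(t(w-1))`,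
the Schütz functions of the TASEP transition probability, with the contour a
positively oriented circle of radius `R` centered at the origin. -/
noncomputable def F (n x : ℤ) (t : ℝ) (R : ℝ) : ℂ :=
  ((-1 : ℂ) ^ n / (2 * ↑Real.pi * Complex.I)) *
    ∮ w in C(0, R), w ^ (n - x - 1) * (1 - w) ^ (-n) * Complex.exp (↑t * (w - 1))

open Complex Metric Set

def natEquivIci (x : ℤ) : ℕ ≃ Ici x where
  toFun k := ⟨x + k, by simp⟩
  invFun y := (y - x).toNat
  left_inv k := by simp
  right_inv y := Subtype.ext <| by simp [Int.toNat_of_nonneg (sub_nonneg.mpr y.2)]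

theorem hasSum_zpow_sub_Ici {𝕜 : Type*} [NormedField 𝕜] [CompleteSpace 𝕜] {w : 𝕜}
    (hw : 1 < ‖w‖) (m x : ℤ) :
    HasSum (fun y : Ici x => w ^ (m - y - 1)) (w ^ (m - x) / (w - 1)) := by
  have hw0 : w ≠ 0 := norm_pos_iff.mp (one_pos.trans hw)
  have hw1 : w - 1 ≠ 0 := sub_ne_zero.mpr fun h => by simp [h] at hw
  have hgeom := (hasSum_geometric_of_norm_lt_one (ξ := w⁻¹) (by
    simpa using inv_lt_one_of_one_lt₀ hw)).mul_left (w ^ (m - x - 1))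
  have hsum : w ^ (m - x) / (w - 1) = w ^ (m - x - 1) * (1 - w⁻¹)⁻¹ := by
    rw [show m - x = (m - x - 1) + 1 by ring, zpow_add_one₀ hw0]
    field_simp
    ring_nf
  rw [hsum, ← (natEquivIci x).hasSum_iff]
  refine hgeom.congr_fun fun k => ?_
  simp only [Function.comp, natEquivIci, Equiv.coe_fn_mk, ← zpow_natCast, inv_zpow',
    ← zpow_add₀ hw0]
  ring_nf

theorem hasSum_circleIntegral_of_norm_le {ι E : Type*} [Countable ι] [NormedAddCommGroup E]
    [NormedSpace ℂ E] {f : ι → ℂ → E} {g : ℂ → E} {c : ℂ} {R : ℝ} {u : ι → ℝ}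
    (hf : ∀ i, CircleIntegrable (f i) c R) (hu : Summable u)
    (hfu : ∀ i, ∀ z ∈ sphere c |R|, ‖f i z‖ ≤ u i)
    (hfg : ∀ z ∈ sphere c |R|, HasSum (fun i => f i z) (g z)) :
    HasSum (fun i => ∮ z in C(c, R), f i z) (∮ z in C(c, R), g z) := by
  refine intervalIntegral.hasSum_integral_of_dominated_convergence (fun i _ => |R| * u i)
    (fun i => (hf i).out.def'.1) (fun i => .of_forall fun θ _ => ?_)
    (.of_forall fun _ _ => hu.mul_left _) intervalIntegrable_const
    (.of_forall fun θ _ => (hfg _ (circleMap_mem_sphere' c R θ)).const_smul _)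
  rw [norm_smul, deriv_circleMap, norm_mul, norm_circleMap_zero, norm_I, mul_one]
  exact mul_le_mul_of_nonneg_left (hfu i _ (circleMap_mem_sphere' c R θ)) (abs_nonneg R)

theorem hasSum_zpow_mul_one_sub_zpow_Ici {w : ℂ} (hw : 1 < ‖w‖) (n x : ℤ) (a : ℂ) :
    HasSum (fun y : Ici x => w ^ (n - y - 1) * (1 - w) ^ (-n) * a)
      (-(w ^ (n + 1 - x - 1) * (1 - w) ^ (-(n + 1)) * a)) := by
  have hw1 : 1 - w ≠ 0 := sub_ne_zero.mpr fun h => by simp [← h] at hw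
  have hsum : -(w ^ (n + 1 - x - 1) * (1 - w) ^ (-(n + 1)) * a) =
      w ^ (n - x) / (w - 1) * (1 - w) ^ (-n) * a := by
    have hinv : (w - 1)⁻¹ = -(1 - w)⁻¹ := by rw [← neg_sub, inv_neg]
    rw [neg_add, zpow_add₀ hw1, zpow_neg_one, show n + 1 - x - 1 = n - x by ring, div_eq_mul_inv,
      hinv]
    ring
  rw [hsum]
  exact ((hasSum_zpow_sub_Ici hw n x).mul_right _).mul_right a

theorem hasSum_circleIntegral_zpow_mul_one_sub_zpow_Ici {g : ℂ → ℂ} {R : ℝ} (hR : 1 < R)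
    (hg : ContinuousOn g (sphere 0 R)) (n x : ℤ) :
    HasSum (fun y : Ici x => ∮ w in C(0, R), w ^ (n - y - 1) * (1 - w) ^ (-n) * g w)
      (-∮ w in C(0, R), w ^ (n + 1 - x - 1) * (1 - w) ^ (-(n + 1)) * g w) := by
  have hRabs : |R| = R := abs_of_pos (one_pos.trans hR)
  rw [← hRabs] at hg
  have hnorm : ∀ w ∈ sphere (0 : ℂ) |R|, ‖w‖ = R := fun w hw => by
    rw [mem_sphere_zero_iff_norm.mp hw, hRabs]
  have hlt : ∀ w ∈ sphere (0 : ℂ) |R|, 1 < ‖w‖ := fun w hw => hnorm w hw ▸ hR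
  have hne : ∀ w ∈ sphere (0 : ℂ) |R|, w ≠ 0 ∧ 1 - w ≠ 0 := fun w hw =>
    ⟨norm_pos_iff.mp (one_pos.trans (hlt w hw)),
      sub_ne_zero.mpr fun h => by simpa [← h] using hlt w hw⟩
  have hcont : ContinuousOn (fun w : ℂ => (1 - w) ^ (-n) * g w) (sphere 0 |R|) :=
    ((continuousOn_const.sub (continuousOn_id' _)).zpow₀ _ fun w hw => .inl (hne w hw).2).mul hg
  obtain ⟨C, hC⟩ := (isCompact_sphere 0 |R|).exists_bound_of_continuousOn hcont
  have hsum := hasSum_circleIntegral_of_norm_le (u := fun y : Ici x => R ^ (n - y - 1) * C)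
    (fun y => (((continuousOn_id' _).zpow₀ _ fun w hw => .inl (hne w hw).1).mul hcont |>.congr
      fun w _ => mul_assoc _ _ _).circleIntegrable')
    ((hasSum_zpow_sub_Ici (by simpa [hRabs]) n x).summable.mul_right C)
    (fun y w hw => by
      rw [mul_assoc, norm_mul, norm_zpow, hnorm w hw]
      exact mul_le_mul_of_nonneg_left (hC w hw) (by positivity))
    (fun w hw => hasSum_zpow_mul_one_sub_zpow_Ici (hlt w hw) n x _)
  simpa only [circleIntegral, smul_neg, intervalIntegral.integral_neg] using hsum

theorem statement8_general (n x : ℤ) (t : ℝ) (R : ℝ) (hR : 1 < R) :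
    Summable (fun y : ↥(Set.Ici x) => F n (↑y) t R) ∧
      F (n + 1) x t R = ∑' y : ↥(Set.Ici x), F n (↑y) t R := by
  have hF : HasSum (fun y : Ici x => F n y t R) _ :=
    (hasSum_circleIntegral_zpow_mul_one_sub_zpow_Ici hR (by fun_prop) n x).mul_left _
  refine ⟨hF.summable, ?_⟩
  rw [hF.tsum_eq, F, zpow_add_one₀ (neg_ne_zero.mpr one_ne_zero)]
  ring

/-- For all `n, x ∈ ℤ` and `t ≥ 0`, the series `∑_{y ≥ x} F_n(y,t)` converges absolutely
and `F_{n+1}(x,t) = ∑_{y ≥ x} F_n(y,t)` (with the contour a circle of any radius `R > 1`). -/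
theorem statement8 (n x : ℤ) (t : ℝ) (ht : 0 ≤ t) (R : ℝ) (hR : 1 < R) :
    Summable (fun y : ↥(Set.Ici x) => F n (↑y) t R) ∧
      F (n + 1) x t R = ∑' y : ↥(Set.Ici x), F n (↑y) t R :=
  statement8_general n x t R hR
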